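/- Let m, n, k be positive integers with k ≤ n, let X ∈ M_m ⊗ M_n, and let X = ∑_{i=1}^r λ_i P_i be any decomposition with λ_i ∈ ℂ and each P_i ∈ M_m ⊗ M_n k-block positive. Then for all unit vectors v, w ∈ ℂ^m ⊗ ℂ^n with SR(v) ≤ k, SR(w) ≤ k, and (P ⊗ I_n) v = w for some P ∈ M_m, one has |⟨v, X w⟩| ≤ ‖∑_{i=1}^r |λ_i| P_i‖_or, where for Hermitian H the order norm is ‖H‖_or := inf{ t ≥ 0 : t I_{mn} + H and t I_{mn} − H are both k-block positive }. (This is the inequality ‖X‖_{M_m(OMIN^k(M_n))} ≤ ‖X‖_dec established in Proposition 5.3.) -/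

import Mathlib

open scoped ComplexOrder Kronecker
open Matrix

noncomputable section

/-- The standard inner product `⟨v, w⟩ = ∑ conj(vᵢ) wᵢ` on `I → ℂ`. -/
def inprod {I : Type*} [Fintype I] (v w : I → ℂ) : ℂ :=
  ∑ i, (starRingEnd ℂ) (v i) * w i

/-- `v` is a unit vector. -/
def UnitVec {I : Type*} [Fintype I] (v : I → ℂ) : Prop :=
  inprod v v = 1

/-- The Schmidt rank of a vector in `ℂ^I ⊗ ℂ^J`, i.e. the rank of the associated
`I × J` coefficient matrix. -/
noncomputable def SchmidtRank {I J : Type*} [Fintype I] [Fintype J] (v : I × J → ℂ) : ℕ :=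
  (Matrix.of fun i j => v (i, j)).rank

/-- The operator norm (largest singular value) of a matrix, as
`sup { |⟨v, A w⟩| : v, w unit vectors }`. -/
noncomputable def opNorm {I J : Type*} [Fintype I] [Fintype J] (A : Matrix I J ℂ) : ℝ :=
  sSup { t : ℝ | ∃ v w, UnitVec v ∧ UnitVec w ∧ t = ‖inprod v (A.mulVec w)‖ }

/-- The `S(k)`-norm of `X ∈ M_I ⊗ M_J`. -/
noncomputable def SNorm {I J : Type*} [Fintype I] [Fintype J] (k : ℕ)
    (X : Matrix (I × J) (I × J) ℂ) : ℝ :=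
  sSup { t : ℝ | ∃ v w : I × J → ℂ, UnitVec v ∧ UnitVec w ∧
    SchmidtRank v ≤ k ∧ SchmidtRank w ≤ k ∧
    t = ‖inprod v (X.mulVec w)‖ }

/-- `X` is a `k`-block positive (Hermitian) operator: `⟨v, X v⟩ ≥ 0` for every
vector of Schmidt rank at most `k`. -/
def kBlockPos {I J : Type*} [Fintype I] [Fintype J] (k : ℕ)
    (X : Matrix (I × J) (I × J) ℂ) : Prop :=
  X.IsHermitian ∧ ∀ v : I × J → ℂ, SchmidtRank v ≤ k → 0 ≤ inprod v (X.mulVec v)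

/-- `ρ` has Schmidt number at most `k` (in particular it is positive semidefinite):
it is a finite nonnegative combination of rank-one projections onto vectors of
Schmidt rank at most `k`. -/
def SchmidtNumberLE {I J : Type*} [Fintype I] [Fintype J] (k : ℕ)
    (ρ : Matrix (I × J) (I × J) ℂ) : Prop :=
  ∃ (N : ℕ) (c : Fin N → ℝ) (v : Fin N → (I × J → ℂ)),
    (∀ i, 0 ≤ c i) ∧ (∀ i, SchmidtRank (v i) ≤ k) ∧
    ρ = ∑ i, (c i : ℂ) • Matrix.vecMulVec (v i) (star (v i))

/-- `id_I ⊗ Φ` : the map applying `Φ` to the second tensor factor. -/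
noncomputable def tensorId {I : Type*} [Fintype I] {a b : ℕ}
    (Φ : Matrix (Fin a) (Fin a) ℂ →ₗ[ℂ] Matrix (Fin b) (Fin b) ℂ)
    (X : Matrix (I × Fin a) (I × Fin a) ℂ) : Matrix (I × Fin b) (I × Fin b) ℂ :=
  Matrix.of fun p q => Φ (Matrix.of fun s t => X (p.1, s) (q.1, t)) p.2 q.2

/-- The trace norm `‖X‖_tr = Tr √(X^* X)`. -/
noncomputable def trNorm {I : Type*} [Fintype I] [DecidableEq I] (X : Matrix I I ℂ) : ℝ :=
  ((Matrix.posSemidef_conjTranspose_mul_self X).1.eigenvectorUnitary.1 *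
    Matrix.diagonal (((↑) : ℝ → ℂ) ∘ Real.sqrt ∘ (Matrix.posSemidef_conjTranspose_mul_self X).1.eigenvalues) *
    (star (Matrix.posSemidef_conjTranspose_mul_self X).1.eigenvectorUnitary : Matrix I I ℂ)).trace.re

end

/-! If every combination `v + β • w` has Schmidt rank at most `k` (as it does when
`w = (Q ⊗ 1) v`), then for a `k`-block positive `P` the positivity of
`⟨v + β w, P (v + β w)⟩`, for the unimodular `β` with `β ⟨v, P w⟩ = -|⟨v, P w⟩|`, gives
`|⟨v, P w⟩| ≤ (⟨v, P v⟩ + ⟨w, P w⟩) / 2`. Weighting by `|λ_i|` and summing bounds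
`|⟨v, X w⟩|` by the mean of `⟨v, S v⟩` and `⟨w, S w⟩` with `S = ∑ |λ_i| P_i`, and each of these
is at most `t` whenever `t • 1 - S` is `k`-block positive. The infimum is over a nonempty set
because `‖S‖ • 1 ± S` are positive semidefinite. -/

section BlockPositivity

variable {I J : Type*} [Fintype I] [Fintype J]

theorem inprod_eq_star_dotProduct (v w : I → ℂ) : inprod v w = star v ⬝ᵥ w := rfl

theorem inprod_sum_smul_mulVec {ι : Type*} (s : Finset ι) (c : ι → ℂ)
    (A : ι → Matrix I I ℂ) (v w : I → ℂ) :
    inprod v ((∑ i ∈ s, c i • A i) *ᵥ w) = ∑ i ∈ s, c i * inprod v (A i *ᵥ w) := by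
  simp only [inprod_eq_star_dotProduct, sum_mulVec, dotProduct_sum, smul_mulVec,
    dotProduct_smul, smul_eq_mul]

theorem Matrix.IsHermitian.re_inprod_add_smul {A : Matrix I I ℂ} (hA : A.IsHermitian)
    (v w : I → ℂ) (β : ℂ) :
    (inprod (v + β • w) (A *ᵥ (v + β • w))).re =
      (inprod v (A *ᵥ v)).re + ‖β‖ ^ 2 * (inprod w (A *ᵥ w)).re +
        2 * (β * inprod v (A *ᵥ w)).re := by
  have hwv : inprod w (A *ᵥ v) = star (inprod v (A *ᵥ w)) := by
    simp only [inprod_eq_star_dotProduct]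
    rw [star_dotProduct, star_mulVec, hA.eq, ← dotProduct_mulVec]
  simp only [inprod_eq_star_dotProduct] at hwv ⊢
  simp only [mulVec_add, mulVec_smul, star_add, star_smul, add_dotProduct, dotProduct_add,
    smul_dotProduct, dotProduct_smul, hwv, smul_eq_mul]
  generalize star v ⬝ᵥ A *ᵥ v = a, star w ⬝ᵥ A *ᵥ w = b, star v ⬝ᵥ A *ᵥ w = c
  simp only [Complex.add_re, Complex.add_im, Complex.mul_re, Complex.mul_im, Complex.star_def,
    Complex.conj_re, Complex.conj_im, Complex.sq_norm, Complex.normSq_apply]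
  ring

theorem kBlockPos.norm_inprod_mulVec_le {k : ℕ} {P : Matrix (I × J) (I × J) ℂ}
    (hP : kBlockPos k P) {v w : I × J → ℂ} (hvw : ∀ β : ℂ, SchmidtRank (v + β • w) ≤ k) :
    ‖inprod v (P *ᵥ w)‖ ≤ ((inprod v (P *ᵥ v)).re + (inprod w (P *ᵥ w)).re) / 2 := by
  obtain ⟨c, hc, hcz⟩ := Complex.exists_norm_eq_mul_self (inprod v (P *ᵥ w))
  have h := (Complex.nonneg_iff.mp (hP.2 _ (hvw (-c)))).1
  rw [hP.1.re_inprod_add_smul, norm_neg, hc, neg_mul, ← hcz] at h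
  simp only [Complex.neg_re, Complex.ofReal_re, one_pow, one_mul] at h
  linarith

theorem norm_inprod_sum_smul_mulVec_le {ι : Type*} (s : Finset ι) {k : ℕ} (lam : ι → ℂ)
    {P : ι → Matrix (I × J) (I × J) ℂ} (hP : ∀ i ∈ s, kBlockPos k (P i)) {v w : I × J → ℂ}
    (hvw : ∀ β : ℂ, SchmidtRank (v + β • w) ≤ k) :
    ‖inprod v ((∑ i ∈ s, lam i • P i) *ᵥ w)‖ ≤
      ((inprod v ((∑ i ∈ s, (‖lam i‖ : ℂ) • P i) *ᵥ v)).re +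
        (inprod w ((∑ i ∈ s, (‖lam i‖ : ℂ) • P i) *ᵥ w)).re) / 2 :=
  calc ‖inprod v ((∑ i ∈ s, lam i • P i) *ᵥ w)‖
      ≤ ∑ i ∈ s, ‖lam i‖ * ‖inprod v (P i *ᵥ w)‖ := by
        rw [inprod_sum_smul_mulVec]
        exact (norm_sum_le _ _).trans_eq (by simp only [norm_mul])
    _ ≤ ∑ i ∈ s, ‖lam i‖ * (((inprod v (P i *ᵥ v)).re + (inprod w (P i *ᵥ w)).re) / 2) :=
        Finset.sum_le_sum fun i hi =>
          mul_le_mul_of_nonneg_left ((hP i hi).norm_inprod_mulVec_le hvw) (norm_nonneg _)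
    _ = _ := by
        simp only [inprod_sum_smul_mulVec, Complex.re_sum, Complex.re_ofReal_mul,
          ← Finset.sum_add_distrib, Finset.sum_div]
        exact Finset.sum_congr rfl fun i _ => by ring

theorem kBlockPos_of_posSemidef {k : ℕ} {A : Matrix (I × J) (I × J) ℂ} (hA : A.PosSemidef) :
    kBlockPos k A :=
  ⟨hA.1, fun v _ => hA.dotProduct_mulVec_nonneg v⟩

variable [DecidableEq I] [DecidableEq J]

theorem schmidtRank_add_smul_kronecker_one_mulVec_le (Q : Matrix I I ℂ) (v : I × J → ℂ)
    (β : ℂ) : SchmidtRank (v + β • ((Q ⊗ₖ (1 : Matrix J J ℂ)) *ᵥ v)) ≤ SchmidtRank v := by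
  have hcoeff : (Matrix.of fun i j => (v + β • ((Q ⊗ₖ (1 : Matrix J J ℂ)) *ᵥ v)) (i, j)) =
      (1 + β • Q) * Matrix.of fun i j => v (i, j) := by
    rw [Matrix.add_mul, Matrix.one_mul, Matrix.smul_mul]
    ext i j
    simp [Matrix.mul_apply, Matrix.mulVec, dotProduct, Fintype.sum_prod_type,
      Matrix.one_apply, Finset.mul_sum]
  exact (congrArg Matrix.rank hcoeff).trans_le (rank_mul_le_right _ _)

open scoped MatrixOrder Matrix.Norms.L2Operator in
theorem exists_kBlockPos_smul_one_add_and_sub (k : ℕ) {S : Matrix (I × J) (I × J) ℂ}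
    (hS : S.IsHermitian) :
    ∃ t : ℝ, 0 ≤ t ∧ kBlockPos k ((t : ℂ) • 1 + S) ∧ kBlockPos k ((t : ℂ) • 1 - S) := by
  have halg : algebraMap ℝ (Matrix (I × J) (I × J) ℂ) ‖S‖ = (‖S‖ : ℂ) • 1 := by
    rw [Algebra.algebraMap_eq_smul_one, ← Complex.coe_smul]
  have hle : S ≤ (‖S‖ : ℂ) • 1 := halg ▸ hS.isSelfAdjoint.le_algebraMap_norm_self
  have hge : -((‖S‖ : ℂ) • 1) ≤ S := halg ▸ hS.isSelfAdjoint.neg_algebraMap_norm_le_self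
  rw [Matrix.le_iff, sub_neg_eq_add, add_comm] at hge
  exact ⟨‖S‖, norm_nonneg S, kBlockPos_of_posSemidef hge, kBlockPos_of_posSemidef hle⟩

theorem kBlockPos.re_inprod_mulVec_le {k : ℕ} {t : ℝ} {S : Matrix (I × J) (I × J) ℂ}
    (h : kBlockPos k ((t : ℂ) • 1 - S)) {u : I × J → ℂ} (hu : UnitVec u)
    (huk : SchmidtRank u ≤ k) : (inprod u (S *ᵥ u)).re ≤ t := by
  have := (Complex.nonneg_iff.mp (h.2 u huk)).1
  rw [sub_mulVec, smul_mulVec, one_mulVec, inprod_eq_star_dotProduct, dotProduct_sub,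
    dotProduct_smul, ← inprod_eq_star_dotProduct, hu] at this
  simpa [inprod_eq_star_dotProduct] using this

end BlockPositivity

theorem matrix_order_norm_le_dec_general (m n k N : ℕ)
    (X : Matrix (Fin m × Fin n) (Fin m × Fin n) ℂ)
    (lam : Fin N → ℂ) (P : Fin N → Matrix (Fin m × Fin n) (Fin m × Fin n) ℂ)
    (hP : ∀ i, kBlockPos k (P i)) (hdec : X = ∑ i, lam i • P i)
    (v w : Fin m × Fin n → ℂ) (hv : UnitVec v) (hw : UnitVec w)
    (hvk : SchmidtRank v ≤ k) (hwk : SchmidtRank w ≤ k)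
    (hrel : ∃ Q : Matrix (Fin m) (Fin m) ℂ,
      (Q ⊗ₖ (1 : Matrix (Fin n) (Fin n) ℂ)).mulVec v = w) :
    ‖inprod v (X.mulVec w)‖ ≤
      sInf { t : ℝ | 0 ≤ t ∧
        kBlockPos k ((t : ℂ) • (1 : Matrix (Fin m × Fin n) (Fin m × Fin n) ℂ) +
          ∑ i, (‖lam i‖ : ℂ) • P i) ∧
        kBlockPos k ((t : ℂ) • (1 : Matrix (Fin m × Fin n) (Fin m × Fin n) ℂ) -
          ∑ i, (‖lam i‖ : ℂ) • P i) } := by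
  have hS : (∑ i, (‖lam i‖ : ℂ) • P i).IsHermitian :=
    isSelfAdjoint_sum _ fun i _ => ((hP i).1.smul (Complex.conj_ofReal _)).isSelfAdjoint
  obtain ⟨Q, rfl⟩ := hrel
  have hvw (β : ℂ) : SchmidtRank (v + β • ((Q ⊗ₖ (1 : Matrix (Fin n) (Fin n) ℂ)) *ᵥ v)) ≤ k :=
    (schmidtRank_add_smul_kronecker_one_mulVec_le Q v β).trans hvk
  refine le_csInf (exists_kBlockPos_smul_one_add_and_sub k hS) ?_
  rintro t ⟨-, -, hsub⟩
  calc _ ≤ _ := hdec ▸ norm_inprod_sum_smul_mulVec_le _ lam (fun i _ => hP i) hvw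
    _ ≤ (t + t) / 2 := by
        gcongr
        exacts [hsub.re_inprod_mulVec_le hv hvk, hsub.re_inprod_mulVec_le hw hwk]
    _ = t := add_self_div_two t

/-- Proposition 5.3: the inequality `‖X‖_{M_m(OMIN^k(M_n))} ≤ ‖X‖_dec`. -/
theorem matrix_order_norm_le_dec (m n k N : ℕ) (hm : 0 < m) (hn : 0 < n)
    (hk : 0 < k) (hkn : k ≤ n)
    (X : Matrix (Fin m × Fin n) (Fin m × Fin n) ℂ)
    (lam : Fin N → ℂ) (P : Fin N → Matrix (Fin m × Fin n) (Fin m × Fin n) ℂ)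
    (hP : ∀ i, kBlockPos k (P i)) (hdec : X = ∑ i, lam i • P i)
    (v w : Fin m × Fin n → ℂ) (hv : UnitVec v) (hw : UnitVec w)
    (hvk : SchmidtRank v ≤ k) (hwk : SchmidtRank w ≤ k)
    (hrel : ∃ Q : Matrix (Fin m) (Fin m) ℂ,
      (Q ⊗ₖ (1 : Matrix (Fin n) (Fin n) ℂ)).mulVec v = w) :
    ‖inprod v (X.mulVec w)‖ ≤
      sInf { t : ℝ | 0 ≤ t ∧
        kBlockPos k ((t : ℂ) • (1 : Matrix (Fin m × Fin n) (Fin m × Fin n) ℂ) +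
          ∑ i, (‖lam i‖ : ℂ) • P i) ∧
        kBlockPos k ((t : ℂ) • (1 : Matrix (Fin m × Fin n) (Fin m × Fin n) ℂ) -
          ∑ i, (‖lam i‖ : ℂ) • P i) } :=
  matrix_order_norm_le_dec_general m n k N X lam P hP hdec v w hv hw hvk hwk hrel
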